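/- arXiv:0805.3111 — 3 statements merged into one kernel-verified Lean document; each statement's English description precedes it below -/
import Mathlib

section
/- Let L be self adjoint on ℂ^{2E} with eigenvalues in σ(L), and let λ⁺_min := min{λ ∈ σ(L) : λ > 0} (set λ⁺_min = ∞ if L has no positive eigenvalue). Then for every real k and every κ with 0 < κ < λ⁺_min, the operator norm of S(k + iκ) = -P - Q(L + i(k+iκ))^{-1}(L - i(k+iκ))Q is at most max{1, (λ⁺_min + κ)/(λ⁺_min - κ)}. -/
/-! With `w = i z`, the matrix `M = (L + w)⁻¹ (L - w)` is the function `x ↦ (x - w) / (x + w)` of `L`,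
so it commutes with `P` and `S(z) = -(P + M Q)`. As `P`, `Q` are complementary orthogonal projections
commuting with `M`, `(P + M Q)⋆ (P + M Q) = P + Q M⋆ M Q ≤ (max 1 ‖M‖) ^ 2`, and the C⋆-identity
gives `‖P + M Q‖ ≤ max 1 ‖M‖`. Finally `‖M‖` is the largest of `|d - w| / |d + w|` over the
eigenvalues `d` of `L`; since `Re w = -κ`, this ratio is at most `1` when `d ≤ 0`, and at most
`(λ⁺ + κ) / (λ⁺ - κ)` when `d ≥ λ⁺` because `(d + κ) / (d - κ)` decreases in `d`. -/

open Matrix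
open scoped Matrix.Norms.L2Operator

/-- The edge S-matrix in the Kuchment projector parametrisation:
S(z) = -P - Q (L + iz)⁻¹ (L - iz) Q with Q = 1 - P, for complex z. -/
noncomputable def SPL {n : Type*} [Fintype n] [DecidableEq n]
    (P L : Matrix n n ℂ) (z : ℂ) : Matrix n n ℂ :=
  -P - (1 - P) * (L + (Complex.I * z) • 1)⁻¹ * (L - (Complex.I * z) • 1) * (1 - P)

open scoped MatrixOrder

section CStarAlgebra

variable {A : Type*} [CStarAlgebra A] [PartialOrder A] [StarOrderedRing A]

lemma norm_add_mul_one_sub_le_max {p m : A} (hp : IsStarProjection p) (hpm : Commute p m) :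
    ‖p + m * (1 - p)‖ ≤ max 1 ‖m‖ := by
  set c := max 1 ‖m‖
  set q := 1 - p
  have hq : IsStarProjection q := hp.one_sub
  have hpmq : star p * (m * q) = 0 := by
    rw [hp.isSelfAdjoint.star_eq, ← mul_assoc, hpm.eq, mul_assoc, hp.mul_one_sub_self, mul_zero]
  have hstar : star (p + m * q) * (p + m * q) = p + star q * (star m * m) * q := by
    have hmqp : star (m * q) * p = 0 := by
      simpa only [star_mul, star_star, star_zero] using congrArg star hpmq
    rw [star_add, add_mul, mul_add, mul_add, hpmq, hmqp, hp.isSelfAdjoint.star_eq,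
      hp.isIdempotentElem.eq, star_mul]
    noncomm_ring
  have hc : 0 ≤ c := zero_le_one.trans (le_max_left _ _)
  have hle : star (p + m * q) * (p + m * q) ≤ algebraMap ℝ A (c ^ 2) :=
    calc star (p + m * q) * (p + m * q)
        ≤ p + ‖star m * m‖ • (star q * q) := by
          rw [hstar]; gcongr; exact CStarAlgebra.star_left_conjugate_le_norm_smul
      _ = p + ‖m‖ ^ 2 • q := by
          rw [CStarRing.norm_star_mul_self, hq.isSelfAdjoint.star_eq, hq.isIdempotentElem.eq, sq]
      _ ≤ c ^ 2 • p + c ^ 2 • q := by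
          gcongr
          · exact le_smul_of_one_le_left hp.nonneg (one_le_pow₀ (le_max_left _ _))
          · exact hq.nonneg
          · exact le_max_right _ _
      _ = algebraMap ℝ A (c ^ 2) := by
          rw [← smul_add, add_sub_cancel, Algebra.algebraMap_eq_smul_one]
  have hnorm : ‖p + m * q‖ ^ 2 ≤ c ^ 2 := by
    rw [sq, ← CStarRing.norm_star_mul_self]
    exact (CStarAlgebra.norm_le_iff_le_algebraMap _ (by positivity) (star_mul_self_nonneg _)).2 hle
  exact (pow_le_pow_iff_left₀ (norm_nonneg _) hc two_ne_zero).1 hnorm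

end CStarAlgebra

lemma Matrix.inv_add_smul_one_mul_sub_smul_one_eq_cfc {n : Type*} [Fintype n] [DecidableEq n]
    {L : Matrix n n ℂ} (hL : IsStarNormal L) {w : ℂ} (hw : ∀ x ∈ spectrum ℂ L, x + w ≠ 0) :
    (L + w • 1)⁻¹ * (L - w • 1) = cfc (fun x => (x - w) / (x + w)) L := by
  have hshift : ∀ v : ℂ, L + v • 1 = cfc (fun x => x + v) L := fun v => by
    rw [cfc_add_const v (fun x => x) L, cfc_id' ℂ L, Algebra.algebraMap_eq_smul_one]
  rw [sub_eq_add_neg, ← neg_smul, hshift, hshift, nonsing_inv_eq_ringInverse,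
    ← cfc_inv (fun x => x + w) L hw, ← cfc_mul (fun x => (x + w)⁻¹) _ L
      ((continuousOn_id.add continuousOn_const).inv₀ hw)]
  simp only [div_eq_inv_mul, sub_eq_add_neg]

lemma SPL_eq_neg_add_cfc_mul {n : Type*} [Fintype n] [DecidableEq n] {P L : Matrix n n ℂ}
    (hP : IsIdempotentElem P) (hL : IsSelfAdjoint L) (hPL : Commute P L) {z : ℂ}
    (hz : ∀ x ∈ spectrum ℂ L, x + Complex.I * z ≠ 0) :
    SPL P L z = -(P + cfc (fun x => (x - Complex.I * z) / (x + Complex.I * z)) L * (1 - P)) := by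
  set M := cfc (fun x => (x - Complex.I * z) / (x + Complex.I * z)) L
  have hQM : Commute (1 - P) M := (Commute.one_left M).sub_left (hL.commute_cfc hPL.symm _).symm
  rw [SPL, Matrix.mul_assoc (1 - P), Matrix.inv_add_smul_one_mul_sub_smul_one_eq_cfc hL.isStarNormal hz, hQM.eq,
    Matrix.mul_assoc, hP.one_sub.eq, neg_add']

lemma abs_add_le_max_mul_abs_sub {lp κ d : ℝ} (hκ : 0 < κ) (hκlp : κ < lp)
    (hd : d ≤ 0 ∨ lp ≤ d) : |d + κ| ≤ max 1 ((lp + κ) / (lp - κ)) * |d - κ| := by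
  rcases hd with hd | hd
  · calc |d + κ| ≤ |d - κ| := by rw [abs_le]; constructor <;> cases abs_cases (d - κ) <;> linarith
      _ ≤ _ := le_mul_of_one_le_left (abs_nonneg _) (le_max_left _ _)
  · have hlpκ : 0 < lp - κ := by linarith
    calc |d + κ| = d + κ := abs_of_pos (by linarith)
      _ ≤ (lp + κ) / (lp - κ) * (d - κ) := by
          rw [div_mul_eq_mul_div, le_div_iff₀ hlpκ]; nlinarith
      _ ≤ _ := by
          rw [abs_of_pos (by linarith : 0 < d - κ)]
          exact mul_le_mul_of_nonneg_right (le_max_right _ _) (by linarith)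

namespace Complex

lemma norm_ofReal_sub_le_mul_norm_ofReal_add {d c : ℝ} {w : ℂ} (hc : 1 ≤ c)
    (h : |d - w.re| ≤ c * |d + w.re|) : ‖(d : ℂ) - w‖ ≤ c * ‖(d : ℂ) + w‖ := by
  have hsq : ‖(d : ℂ) - w‖ ^ 2 ≤ (c * ‖(d : ℂ) + w‖) ^ 2 := by
    have hre : (d - w.re) ^ 2 ≤ c ^ 2 * (d + w.re) ^ 2 := by
      rw [← sq_abs (d - w.re), ← sq_abs (d + w.re), ← mul_pow]
      exact pow_le_pow_left₀ (abs_nonneg _) h 2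
    rw [mul_pow, Complex.sq_norm, Complex.sq_norm, normSq_apply, normSq_apply]
    simp only [sub_re, add_re, sub_im, add_im, ofReal_re, ofReal_im]
    nlinarith [one_le_pow₀ (n := 2) hc, sq_nonneg w.im]
  exact (pow_le_pow_iff_left₀ (norm_nonneg _) (by positivity) two_ne_zero).1 hsq

lemma norm_ofReal_sub_div_ofReal_add_le {d c : ℝ} {w : ℂ} (hc : 1 ≤ c) (hd : d + w.re ≠ 0)
    (h : |d - w.re| ≤ c * |d + w.re|) : ‖((d : ℂ) - w) / ((d : ℂ) + w)‖ ≤ c := by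
  have hden : 0 < ‖(d : ℂ) + w‖ :=
    (abs_pos.2 hd).trans_le (by simpa using abs_re_le_norm ((d : ℂ) + w))
  rw [norm_div, div_le_iff₀ hden]
  exact norm_ofReal_sub_le_mul_norm_ofReal_add hc h

end Complex

theorem stmt_9_general (E : ℕ) (P L : Matrix (Fin (2*E)) (Fin (2*E)) ℂ)
    (hP : P.IsHermitian) (hP2 : P * P = P)
    (hL : L.IsHermitian) (hPL : P * L = 0) (hLP : L * P = 0)
    (lp : ℝ)
    (hspec : ∀ μ : ℝ, (μ : ℂ) ∈ spectrum ℂ L → 0 < μ → lp ≤ μ) :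
    ∀ (k κ : ℝ), 0 < κ → κ < lp →
      ‖SPL P L ((k : ℂ) + (κ : ℂ) * Complex.I)‖ ≤ max 1 ((lp + κ) / (lp - κ)) := by
  intro k κ hκ hκlp
  set w := Complex.I * ((k : ℂ) + (κ : ℂ) * Complex.I)
  have hw : w.re = -κ := by simp [w]
  have hL' : IsSelfAdjoint L := hL
  have hgap : ∀ x ∈ spectrum ℂ L, x = (x.re : ℂ) ∧ x.re + w.re ≠ 0 ∧
      |x.re - w.re| ≤ max 1 ((lp + κ) / (lp - κ)) * |x.re + w.re| := fun x hx => by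
    have hx_re := hL'.mem_spectrum_eq_re hx
    have hd := (le_or_gt x.re 0).imp_right (hspec x.re (hx_re ▸ hx))
    refine ⟨hx_re, ?_, ?_⟩
    · rcases hd with hd | hd <;> rw [hw] <;> linarith
    · simpa only [hw, sub_neg_eq_add, ← sub_eq_add_neg] using abs_add_le_max_mul_abs_sub hκ hκlp hd
  rw [SPL_eq_neg_add_cfc_mul hP2 hL' (hPL.trans hLP.symm), norm_neg]
  · refine (norm_add_mul_one_sub_le_max ⟨hP2, hP⟩ ?_).trans (max_le (le_max_left _ _) ?_)
    · exact (hL'.commute_cfc (hLP.trans hPL.symm) _).symm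
    · refine norm_cfc_le (zero_le_one.trans (le_max_left _ _)) fun x hx => ?_
      obtain ⟨hx_re, hd, hbound⟩ := hgap x hx
      rw [hx_re]
      exact Complex.norm_ofReal_sub_div_ofReal_add_le (le_max_left _ _) hd hbound
  · intro x hx h0
    obtain ⟨hx_re, hd, -⟩ := hgap x hx
    exact hd (by simpa [hw] using congrArg Complex.re h0)

/-- if λ⁺_min is a lower bound for the positive eigenvalues of the
self adjoint matrix L, then for all real k and 0 < κ < λ⁺_min the operator norm
of S(k + iκ) is at most max{1, (λ⁺_min + κ)/(λ⁺_min - κ)}. -/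
theorem stmt_9 (E : ℕ) (P L : Matrix (Fin (2*E)) (Fin (2*E)) ℂ)
    (hP : P.IsHermitian) (hP2 : P * P = P)
    (hL : L.IsHermitian) (hPL : P * L = 0) (hLP : L * P = 0)
    (lp : ℝ) (hlp : 0 < lp)
    (hspec : ∀ μ : ℝ, (μ : ℂ) ∈ spectrum ℂ L → 0 < μ → lp ≤ μ) :
    ∀ (k κ : ℝ), 0 < κ → κ < lp →
      ‖SPL P L ((k : ℂ) + (κ : ℂ) * Complex.I)‖ ≤ max 1 ((lp + κ) / (lp - κ)) :=
  stmt_9_general E P L hP hP2 hL hPL hLP lp hspec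
end

section
/- With the same setup, if κ > λ_max := max{|λ| : λ ∈ σ(L)\{0}}, then ‖S(k + iκ)‖ ≤ (κ + λ_max)/(κ - λ_max) for all real k. -/
/-!
With `w = i(k + iκ) = -κ + ik` we have `S = -P - Q M Q`, where `Q = 1 - P` and
`M = (L + w)⁻¹ (L - w)`. As `P` and `Q` project onto orthogonal subspaces, Pythagoras gives
`‖S‖ ≤ max 1 ‖M‖`. The matrix `M` is `f(L)` for `f(x) = (x + w)⁻¹ (x - w)` in the continuous
functional calculus of the normal matrix `L`, so `‖M‖ ≤ sup_{σ(L)} |f|`; and for real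
`|μ| ≤ λ_max < κ`, `|f(μ)|² = ((κ + μ)² + k²) / ((κ - μ)² + k²) ≤ ((κ + λ_max) / (κ - λ_max))²`.
-/
open Matrix
open scoped Matrix.Norms.L2Operator

open scoped InnerProductSpace

section Compression

variable {𝕜 H : Type*} [RCLike 𝕜] [NormedAddCommGroup H] [InnerProductSpace 𝕜 H] [CompleteSpace H]

lemma IsStarProjection.inner_apply_one_sub_apply {p : H →L[𝕜] H} (hp : IsStarProjection p)
    (x y : H) : ⟪p x, (1 - p) y⟫_𝕜 = 0 := by
  have hsymm := hp.isSelfAdjoint.isSymmetric x ((1 - p) y)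
  simp only [ContinuousLinearMap.coe_coe] at hsymm
  rw [hsymm, show p ((1 - p) y) = (p * (1 - p)) y from rfl, hp.mul_one_sub_self,
    _root_.zero_apply, inner_zero_right]

lemma IsStarProjection.norm_sq_add_norm_sq_one_sub {p : H →L[𝕜] H} (hp : IsStarProjection p)
    (x : H) : ‖p x‖ ^ 2 + ‖(1 - p) x‖ ^ 2 = ‖x‖ ^ 2 := by
  have hpyth := norm_add_sq_eq_norm_sq_add_norm_sq_of_inner_eq_zero _ _
    (hp.inner_apply_one_sub_apply x x)
  simpa [sq] using hpyth.symm

lemma IsStarProjection.norm_neg_sub_compress_le {p m : H →L[𝕜] H} (hp : IsStarProjection p)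
    {C : ℝ} (hC : 1 ≤ C) (hm : ‖m‖ ≤ C) : ‖-p - (1 - p) * m * (1 - p)‖ ≤ C := by
  set q := 1 - p
  refine (ContinuousLinearMap.opNorm_le_iff (by linarith)).2 fun v => ?_
  have hmq : ‖q (m (q v))‖ ≤ C * ‖q v‖ := calc
    ‖q (m (q v))‖ ≤ ‖m (q v)‖ := q.le_of_opNorm_le hp.one_sub.norm_le _ |>.trans_eq (one_mul _)
    _ ≤ C * ‖q v‖ := m.le_of_opNorm_le hm _
  have hpyth : ‖(-p - q * m * q) v‖ ^ 2 = ‖p v‖ ^ 2 + ‖q (m (q v))‖ ^ 2 := by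
    have : (-p - q * m * q) v = -(p v + q (m (q v))) := by
      simp only [_root_.sub_apply, _root_.neg_apply, mul_apply_eq_comp, neg_add_rev]
      abel
    rw [this, norm_neg, sq, sq, sq, norm_add_sq_eq_norm_sq_add_norm_sq_of_inner_eq_zero _ _
      (hp.inner_apply_one_sub_apply v _)]
  refine (pow_le_pow_iff_left₀ (norm_nonneg _) (by positivity) two_ne_zero).1 ?_
  calc ‖(-p - q * m * q) v‖ ^ 2 = ‖p v‖ ^ 2 + ‖q (m (q v))‖ ^ 2 := hpyth
    _ ≤ C ^ 2 * ‖p v‖ ^ 2 + (C * ‖q v‖) ^ 2 := by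
        gcongr
        exact le_mul_of_one_le_left (by positivity) (one_le_pow₀ hC)
    _ = (C * ‖v‖) ^ 2 := by
        linear_combination C ^ 2 * hp.norm_sq_add_norm_sq_one_sub v

end Compression

section Cayley

variable {A : Type*} [CStarAlgebra A]

lemma cfc_inv_add_mul_sub (a : A) [IsStarNormal a] {w : ℂ} (hw : -w ∉ spectrum ℂ a) :
    cfc (fun x => (x + w)⁻¹ * (x - w)) a
      = Ring.inverse (a + algebraMap ℂ A w) * (a - algebraMap ℂ A w) := by
  have hne : ∀ x ∈ spectrum ℂ a, x + w ≠ 0 := fun x hx h => hw (by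
    rwa [← eq_neg_of_add_eq_zero_left h])
  have hcont : ContinuousOn (fun x : ℂ => (x + w)⁻¹) (spectrum ℂ a) :=
    (continuousOn_id.add continuousOn_const).inv₀ hne
  rw [cfc_mul _ _ a hcont, cfc_inv (fun x => x + w) a hne, cfc_add_const w (fun x => x) a,
    cfc_sub (fun x => x) (fun _ => w) a, cfc_id' ℂ a, cfc_const w a]

lemma norm_inverse_add_mul_sub_le (a : A) [IsStarNormal a] {w : ℂ} (hw : -w ∉ spectrum ℂ a)
    {C : ℝ} (hC : 0 ≤ C) (h : ∀ x ∈ spectrum ℂ a, ‖(x + w)⁻¹ * (x - w)‖ ≤ C) :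
    ‖Ring.inverse (a + algebraMap ℂ A w) * (a - algebraMap ℂ A w)‖ ≤ C := by
  rw [← cfc_inv_add_mul_sub a hw]
  exact norm_cfc_le hC h

end Cayley

lemma Complex.norm_inv_add_mul_sub_le {μ l κ : ℝ} {w : ℂ} (hw : w.re = -κ) (hμ : |μ| ≤ l)
    (hlκ : l < κ) : ‖((μ : ℂ) + w)⁻¹ * ((μ : ℂ) - w)‖ ≤ (κ + l) / (κ - l) := by
  obtain ⟨hlμ, hμl⟩ := abs_le.1 hμ
  have hC : 1 ≤ (κ + l) / (κ - l) := (one_le_div (by linarith)).2 (by linarith)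
  have hreal : μ + κ ≤ (κ + l) / (κ - l) * (κ - μ) := by
    rw [div_mul_eq_mul_div, le_div_iff₀ (by linarith)]
    nlinarith
  have hnorm_add : ‖(μ : ℂ) + w‖ ^ 2 = (κ - μ) ^ 2 + w.im ^ 2 := by
    rw [Complex.sq_norm, normSq_apply]
    simp only [add_re, ofReal_re, hw, add_im, ofReal_im, zero_add]
    ring
  have hnorm_sub : ‖(μ : ℂ) - w‖ ^ 2 = (μ + κ) ^ 2 + w.im ^ 2 := by
    rw [Complex.sq_norm, normSq_apply]
    simp only [sub_re, ofReal_re, hw, sub_im, ofReal_im, zero_sub, mul_neg, neg_mul, neg_neg]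
    ring
  have hpos : 0 < ‖(μ : ℂ) + w‖ := norm_pos_iff.2 fun h => by
    have := congrArg Complex.re h
    simp only [add_re, ofReal_re, hw, zero_re] at this
    linarith
  rw [norm_mul, norm_inv, inv_mul_le_iff₀ hpos,
    ← pow_le_pow_iff_left₀ (norm_nonneg _) (by positivity) two_ne_zero, mul_pow, hnorm_add,
    hnorm_sub]
  have hsq := pow_le_pow_left₀ (by linarith) hreal 2
  have him := le_mul_of_one_le_right (sq_nonneg w.im) (one_le_pow₀ (n := 2) hC)
  linarith

namespace Matrix

variable {n : Type*} [Fintype n] [DecidableEq n]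

lemma norm_neg_sub_compress_le {P M : Matrix n n ℂ} (hP : IsStarProjection P) {C : ℝ}
    (hC : 1 ≤ C) (hM : ‖M‖ ≤ C) : ‖-P - (1 - P) * M * (1 - P)‖ ≤ C := by
  rw [cstar_norm_def] at hM ⊢
  simpa only [map_sub, map_neg, _root_.map_mul, _root_.map_one] using
    (hP.map (toEuclideanCLM (n := n) (𝕜 := ℂ))).norm_neg_sub_compress_le hC hM

lemma IsHermitian.norm_inv_add_smul_mul_sub_smul_le {L : Matrix n n ℂ} (hL : L.IsHermitian)
    {l κ : ℝ} (hspec : ∀ μ ∈ spectrum ℂ L, ‖μ‖ ≤ l) (hl : 0 ≤ l) (hlκ : l < κ) {w : ℂ}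
    (hw : w.re = -κ) : ‖(L + w • 1)⁻¹ * (L - w • 1)‖ ≤ (κ + l) / (κ - l) := by
  have : IsStarNormal L := hL.isSelfAdjoint.isStarNormal
  have hwσ : -w ∉ spectrum ℂ L := fun h => by
    have := (Complex.abs_re_le_norm (-w)).trans (hspec _ h)
    rw [Complex.neg_re, hw, neg_neg, abs_of_pos (by linarith)] at this
    linarith
  have hbound := norm_inverse_add_mul_sub_le L hwσ (C := (κ + l) / (κ - l))
    (div_nonneg (by linarith) (by linarith))
    fun μ hμ => by
      rw [hL.isSelfAdjoint.mem_spectrum_eq_re hμ]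
      refine Complex.norm_inv_add_mul_sub_le hw ?_ hlκ
      exact (Complex.abs_re_le_norm μ).trans (hspec μ hμ)
  rwa [Algebra.algebraMap_eq_smul_one, ← nonsing_inv_eq_ringInverse] at hbound

end Matrix

theorem stmt_10_general (E : ℕ) (P L : Matrix (Fin (2*E)) (Fin (2*E)) ℂ)
    (hP : P.IsHermitian) (hP2 : P * P = P)
    (hL : L.IsHermitian)
    (lmax : ℝ) (hlmax : 0 ≤ lmax)
    (hspec : ∀ μ : ℂ, μ ∈ spectrum ℂ L → ‖μ‖ ≤ lmax) :
    ∀ (k κ : ℝ), lmax < κ →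
      ‖SPL P L ((k : ℂ) + (κ : ℂ) * Complex.I)‖ ≤ (κ + lmax) / (κ - lmax) := by
  intro k κ hκ
  have hw : (Complex.I * ((k : ℂ) + (κ : ℂ) * Complex.I)).re = -κ := by simp
  have hC : 1 ≤ (κ + lmax) / (κ - lmax) := (one_le_div (by linarith)).2 (by linarith)
  rw [SPL, mul_assoc (1 - P)]
  exact Matrix.norm_neg_sub_compress_le ⟨hP2, hP⟩ hC
    (hL.norm_inv_add_smul_mul_sub_smul_le hspec hlmax hκ hw)

/-- if λ_max ≥ 0 bounds the moduli of the eigenvalues of the self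
adjoint matrix L and κ > λ_max, then ‖S(k + iκ)‖ ≤ (κ + λ_max)/(κ - λ_max)
for all real k. -/
theorem stmt_10 (E : ℕ) (P L : Matrix (Fin (2*E)) (Fin (2*E)) ℂ)
    (hP : P.IsHermitian) (hP2 : P * P = P)
    (hL : L.IsHermitian) (hPL : P * L = 0) (hLP : L * P = 0)
    (lmax : ℝ) (hlmax : 0 ≤ lmax)
    (hspec : ∀ μ : ℂ, μ ∈ spectrum ℂ L → ‖μ‖ ≤ lmax) :
    ∀ (k κ : ℝ), lmax < κ →
      ‖SPL P L ((k : ℂ) + (κ : ℂ) * Complex.I)‖ ≤ (κ + lmax) / (κ - lmax) :=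
  stmt_10_general E P L hP hP2 hL lmax hlmax hspec
end

section
/- Suppose l_min > 2/λ⁺_min, where λ⁺_min is the smallest positive eigenvalue of L (∞ if none). Then there exists ε₀ > 0 such that for all 0 < ε < ε₀ the condition ε < λ⁺_min tanh(ε l_min / 2) holds, and for any such ε and all real k, ‖U(k + iε)‖ ≤ max{1, (λ⁺_min + ε)/(λ⁺_min - ε)} e^{-ε l_min} < 1, so that (1 - U(k+iε))^{-1} = Σ_{l=0}^∞ U(k+iε)^l converges absolutely. -/
/-!
Write `z = k + iε`, `λ = λ⁺_min` and `A = (L + iz)⁻¹(L - iz)`. Diagonalising the Hermitian `L`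
makes `A` unitarily equivalent to the diagonal matrix of `(μ + iz)⁻¹(μ - iz)` over the
eigenvalues `μ`, of modulus `√((μ + ε)² + k²) / √((μ - ε)² + k²)`: at most `1` for `μ ≤ 0`, and
at most `(λ + ε)/(λ - ε)` for `μ ≥ λ` because `(μ + ε)/(μ - ε)` decreases in `μ`. As
`S = -(P + (1 - P) A (1 - P))` with `P` an orthogonal projection, Pythagoras gives
`‖S‖ ≤ max 1 ‖A‖`, and `T` is a permutation matrix times a diagonal matrix with entries of
modulus `e^{-ε l_j}`.

For `0 < ε < λ - 2/l_min`, `e^x ≥ 1 + x` turns `(λ - ε) l_min > 2` into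
`λ + ε < (λ - ε) e^{ε l_min}`, which is both the `tanh` condition and `‖U‖ < 1`.
-/
open Matrix
open scoped Matrix.Norms.L2Operator

/-- The metric matrix T(𝒍;z) with off-diagonal blocks diag(e^{izl_j}). -/
noncomputable def Tmat {E : ℕ} (l : Fin E → ℝ) (z : ℂ) :
    Matrix (Fin E ⊕ Fin E) (Fin E ⊕ Fin E) ℂ :=
  Matrix.fromBlocks 0 (Matrix.diagonal fun j => Complex.exp (Complex.I * z * (l j)))
    (Matrix.diagonal fun j => Complex.exp (Complex.I * z * (l j))) 0

namespace ContinuousLinearMap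
variable {𝕜 E : Type*} [RCLike 𝕜] [NormedAddCommGroup E] [InnerProductSpace 𝕜 E] [CompleteSpace E]
  {P : E →L[𝕜] E}

lemma inner_apply_one_sub_apply_eq_zero (hP : IsStarProjection P) (x y : E) :
    inner 𝕜 (P x) ((1 - P) y) = 0 := by
  rw [← adjoint_inner_right, ← star_eq_adjoint, hP.isSelfAdjoint.star_eq]
  change inner 𝕜 x ((P * (1 - P)) y) = 0
  rw [hP.mul_one_sub_self, _root_.zero_apply, inner_zero_right]

lemma norm_sq_apply_add_one_sub_apply (hP : IsStarProjection P) (x y : E) :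
    ‖P x + (1 - P) y‖ ^ 2 = ‖P x‖ ^ 2 + ‖(1 - P) y‖ ^ 2 := by
  rw [sq, sq, sq, norm_add_sq_eq_norm_sq_add_norm_sq_of_inner_eq_zero _ _
    (inner_apply_one_sub_apply_eq_zero hP x y)]

lemma norm_add_one_sub_mul_mul_one_sub_le (hP : IsStarProjection P) (A : E →L[𝕜] E) :
    ‖P + (1 - P) * A * (1 - P)‖ ≤ max 1 ‖A‖ := by
  set C := max 1 ‖A‖
  have hC : 1 ≤ C := le_max_left _ _
  refine opNorm_le_bound _ (zero_le_one.trans hC) fun x => ?_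
  have hQ : ‖(1 - P) (A ((1 - P) x))‖ ≤ C * ‖(1 - P) x‖ :=
    calc ‖(1 - P) (A ((1 - P) x))‖ ≤ ‖A ((1 - P) x)‖ :=
          (le_opNorm _ _).trans (mul_le_of_le_one_left (norm_nonneg _) hP.one_sub.norm_le)
      _ ≤ ‖A‖ * ‖(1 - P) x‖ := le_opNorm _ _
      _ ≤ C * ‖(1 - P) x‖ := by gcongr; exact le_max_right _ _
  have hx : ‖x‖ ^ 2 = ‖P x‖ ^ 2 + ‖(1 - P) x‖ ^ 2 := by
    rw [← norm_sq_apply_add_one_sub_apply hP]; simp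
  refine le_of_sq_le_sq ?_ (by positivity)
  calc ‖(P + (1 - P) * A * (1 - P)) x‖ ^ 2
      = ‖P x‖ ^ 2 + ‖(1 - P) (A ((1 - P) x))‖ ^ 2 := norm_sq_apply_add_one_sub_apply hP _ _
    _ ≤ C ^ 2 * ‖P x‖ ^ 2 + (C * ‖(1 - P) x‖) ^ 2 := by
        gcongr
        exact le_mul_of_one_le_left (by positivity) (one_le_pow₀ hC)
    _ = (C * ‖x‖) ^ 2 := by rw [mul_pow, mul_pow, hx]; ring

end ContinuousLinearMap

namespace Matrix
variable {n : Type*} [Fintype n] [DecidableEq n]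

lemma norm_add_one_sub_mul_mul_one_sub_le {P : Matrix n n ℂ} (hP : IsStarProjection P)
    (A : Matrix n n ℂ) : ‖P + (1 - P) * A * (1 - P)‖ ≤ max 1 ‖A‖ := by
  simpa [cstar_norm_def] using
    ContinuousLinearMap.norm_add_one_sub_mul_mul_one_sub_le
      (hP.map (toEuclideanCLM (n := n) (𝕜 := ℂ))) (toEuclideanCLM (n := n) (𝕜 := ℂ) A)

lemma norm_conjStarAlgAut_diagonal (U : unitary (Matrix n n ℂ)) (d : n → ℂ) :
    ‖Unitary.conjStarAlgAut ℂ _ U (diagonal d)‖ = ‖d‖ := by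
  rw [Unitary.conjStarAlgAut_apply, CStarRing.norm_mul_mem_unitary _ (Unitary.star_mem U.2),
    CStarRing.norm_coe_unitary_mul, l2_opNorm_diagonal]

lemma IsHermitian.norm_inv_add_smul_mul_sub_smul_le_s17 {L : Matrix n n ℂ} (hL : L.IsHermitian)
    {c : ℂ} {C : ℝ} (hC : 0 ≤ C) (hc : ∀ i, (hL.eigenvalues i : ℂ) + c ≠ 0)
    (hbound : ∀ i, ‖((hL.eigenvalues i : ℂ) + c)⁻¹ * ((hL.eigenvalues i : ℂ) - c)‖ ≤ C) :
    ‖(L + c • 1)⁻¹ * (L - c • 1)‖ ≤ C := by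
  set φ := Unitary.conjStarAlgAut ℂ _ hL.eigenvectorUnitary
  set μ : n → ℂ := fun i => hL.eigenvalues i
  have hshift (a : ℂ) : L + a • 1 = φ (diagonal fun i => μ i + a) := by
    rw [← diagonal_add, ← smul_one_eq_diagonal, map_add, map_smul, map_one]
    conv_lhs => rw [hL.spectral_theorem]
    rfl
  have hinv : (L + c • 1)⁻¹ = φ (diagonal fun i => (μ i + c)⁻¹) := by
    refine inv_eq_left_inv ?_
    have hμc : (fun i => (μ i + c)⁻¹ * (μ i + c)) = fun _ => 1 :=
      funext fun i => inv_mul_cancel₀ (hc i)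
    rw [hshift, ← map_mul, diagonal_mul_diagonal, hμc, diagonal_one, map_one]
  have hcayley : (L + c • 1)⁻¹ * (L - c • 1) = φ (diagonal fun i => (μ i + c)⁻¹ * (μ i - c)) := by
    rw [hinv, sub_eq_add_neg, ← neg_smul, hshift, ← map_mul, diagonal_mul_diagonal]
    simp only [sub_eq_add_neg]
  rw [hcayley, norm_conjStarAlgAut_diagonal]
  exact (pi_norm_le_iff_of_nonneg hC).2 hbound

lemma norm_fromBlocks_zero_diagonal_diagonal_zero_le {m : Type*} [Fintype m] [DecidableEq m]
    (d : m → ℂ) :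
    ‖(fromBlocks 0 (diagonal d) (diagonal d) 0 : Matrix (m ⊕ m) (m ⊕ m) ℂ)‖ ≤ ‖d‖ := by
  have hswap : (fromBlocks 0 1 1 0 : Matrix (m ⊕ m) (m ⊕ m) ℂ) ∈ unitary _ := by
    rw [Unitary.mem_iff, star_eq_conjTranspose, fromBlocks_conjTranspose, fromBlocks_multiply,
      fromBlocks_multiply]
    simp
  have hfactor : (fromBlocks 0 (diagonal d) (diagonal d) 0 : Matrix (m ⊕ m) (m ⊕ m) ℂ)
      = diagonal (Sum.elim d d) * fromBlocks 0 1 1 0 := by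
    rw [← fromBlocks_diagonal, fromBlocks_multiply]
    simp
  rw [hfactor, CStarRing.norm_mul_mem_unitary _ hswap, l2_opNorm_diagonal]
  refine (pi_norm_le_iff_of_nonneg (norm_nonneg d)).2 fun i => ?_
  cases i <;> exact norm_le_pi_norm d _

end Matrix

lemma norm_SPL_le {n : Type*} [Fintype n] [DecidableEq n] {P : Matrix n n ℂ}
    (hP : IsStarProjection P) (L : Matrix n n ℂ) (z : ℂ) :
    ‖SPL P L z‖ ≤ max 1 ‖(L + (Complex.I * z) • 1)⁻¹ * (L - (Complex.I * z) • 1)‖ := by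
  have hS : SPL P L z = -(P + (1 - P) *
      ((L + (Complex.I * z) • 1)⁻¹ * (L - (Complex.I * z) • 1)) * (1 - P)) := by
    rw [SPL, neg_add', Matrix.mul_assoc (1 - P)]
  rw [hS, norm_neg]
  exact norm_add_one_sub_mul_mul_one_sub_le hP _

namespace Complex

lemma ofReal_add_ne_zero_of_re_eq {μ ε : ℝ} {w : ℂ} (hw : w.re = -ε) (hμ : μ ≠ ε) :
    (μ : ℂ) + w ≠ 0 := fun h => hμ <| by
  have hre := congrArg re h
  simp only [add_re, ofReal_re, hw, zero_re] at hre
  linarith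

lemma norm_inv_ofReal_add_mul_ofReal_sub_le {μ ε lp : ℝ} {w : ℂ} (hw : w.re = -ε) (hε : 0 < ε)
    (hεlp : ε < lp) (hμ : μ ≤ 0 ∨ lp ≤ μ) :
    ‖((μ : ℂ) + w)⁻¹ * ((μ : ℂ) - w)‖ ≤ max 1 ((lp + ε) / (lp - ε)) := by
  have hne : (μ : ℂ) + w ≠ 0 :=
    ofReal_add_ne_zero_of_re_eq hw (by rcases hμ with hμ | hμ <;> linarith)
  have hadd : ‖(μ : ℂ) + w‖ ^ 2 = (μ - ε) ^ 2 + w.im ^ 2 := by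
    rw [Complex.sq_norm, normSq_apply]; simp [hw]; ring
  have hsub : ‖(μ : ℂ) - w‖ ^ 2 = (μ + ε) ^ 2 + w.im ^ 2 := by
    rw [Complex.sq_norm, normSq_apply]; simp [hw]; ring
  rw [norm_mul, norm_inv, inv_mul_le_iff₀ (norm_pos_iff.2 hne)]
  rcases hμ with hμ | hμ
  · refine le_trans ?_ (mul_le_mul_of_nonneg_left (le_max_left _ _) (norm_nonneg _))
    rw [mul_one, ← pow_le_pow_iff_left₀ (norm_nonneg _) (norm_nonneg _) two_ne_zero, hadd, hsub]
    nlinarith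
  · refine le_trans ?_ (mul_le_mul_of_nonneg_left (le_max_right _ _) (norm_nonneg _))
    rw [mul_div_assoc', le_div_iff₀ (by linarith),
      ← pow_le_pow_iff_left₀ (by positivity) (mul_nonneg (norm_nonneg _) (by linarith))
        two_ne_zero, mul_pow, mul_pow, hadd, hsub]
    have hdecr : (μ + ε) * (lp - ε) ≤ (μ - ε) * (lp + ε) := by nlinarith
    have hsq := mul_self_le_mul_self (mul_nonneg (by linarith) (by linarith)) hdecr
    have him : w.im ^ 2 * (lp - ε) ^ 2 ≤ w.im ^ 2 * (lp + ε) ^ 2 := by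
      gcongr
      linarith
    nlinarith

end Complex

lemma norm_SPL_le_of_spectrum {n : Type*} [Fintype n] [DecidableEq n] {P L : Matrix n n ℂ}
    (hP : IsStarProjection P) (hL : L.IsHermitian) {lp ε : ℝ} (hε : 0 < ε) (hεlp : ε < lp)
    (hspec : ∀ μ : ℝ, (μ : ℂ) ∈ spectrum ℂ L → 0 < μ → lp ≤ μ) (k : ℝ) :
    ‖SPL P L ((k : ℂ) + (ε : ℂ) * Complex.I)‖ ≤ max 1 ((lp + ε) / (lp - ε)) := by
  have hw : (Complex.I * ((k : ℂ) + (ε : ℂ) * Complex.I)).re = -ε := by simp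
  have hgap (i : n) : hL.eigenvalues i ≤ 0 ∨ lp ≤ hL.eigenvalues i := by
    refine (le_or_gt _ 0).imp_right fun hpos => hspec _ ?_ hpos
    exact spectrum.algebraMap_mem ℂ (hL.eigenvalues_mem_spectrum_real i)
  refine (norm_SPL_le hP L _).trans (max_le (le_max_left _ _) ?_)
  refine hL.norm_inv_add_smul_mul_sub_smul_le_s17 (zero_le_one.trans (le_max_left _ _))
    (fun i => ?_) fun i =>
    Complex.norm_inv_ofReal_add_mul_ofReal_sub_le hw hε hεlp (hgap i)
  exact Complex.ofReal_add_ne_zero_of_re_eq hw (by rcases hgap i with h | h <;> linarith)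

lemma norm_Tmat_le {E : ℕ} {l : Fin E → ℝ} {lmin : ℝ} (hl : ∀ j, lmin ≤ l j) {ε : ℝ}
    (hε : 0 ≤ ε) (k : ℝ) :
    ‖Tmat l ((k : ℂ) + (ε : ℂ) * Complex.I)‖ ≤ Real.exp (-(ε * lmin)) := by
  refine (norm_fromBlocks_zero_diagonal_diagonal_zero_le _).trans ?_
  refine (pi_norm_le_iff_of_nonneg (Real.exp_pos _).le).2 fun j => ?_
  rw [Complex.norm_exp]
  gcongr
  simpa using mul_le_mul_of_nonneg_left (hl j) hε

namespace Real

lemma tanh_half_eq (x : ℝ) : tanh (x / 2) = (exp x - 1) / (exp x + 1) := by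
  have hx : exp x = exp (x / 2) * exp (x / 2) := by rw [← exp_add, add_halves]
  rw [tanh_eq_sinh_div_cosh, sinh_eq, cosh_eq, exp_neg, hx]
  field_simp

lemma add_lt_sub_mul_exp {ε lp lmin : ℝ} (hε : 0 < ε) (hεlp : ε < lp)
    (hgap : 2 < (lp - ε) * lmin) : lp + ε < (lp - ε) * exp (ε * lmin) := by
  nlinarith [mul_le_mul_of_nonneg_left (add_one_le_exp (ε * lmin)) (sub_pos.2 hεlp).le]

lemma lt_mul_tanh_of_add_lt_sub_mul_exp {ε lp x : ℝ} (h : lp + ε < (lp - ε) * exp x) :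
    ε < lp * tanh (x / 2) := by
  rw [tanh_half_eq, ← mul_div_assoc, lt_div_iff₀ (by positivity)]
  linarith

lemma max_one_div_mul_exp_neg_lt_one {ε lp x : ℝ} (hx : 0 < x) (hεlp : ε < lp)
    (h : lp + ε < (lp - ε) * exp x) : max 1 ((lp + ε) / (lp - ε)) * exp (-x) < 1 := by
  have hpos : 0 < lp - ε := sub_pos.2 hεlp
  rw [max_mul_of_nonneg _ _ (exp_pos _).le, max_lt_iff, one_mul, exp_lt_one_iff, neg_lt_zero,
    div_mul_eq_mul_div, div_lt_one hpos, exp_neg, mul_inv_lt_iff₀ (exp_pos _)]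
  exact ⟨hx, h⟩

end Real

theorem stmt_17_general (E : ℕ) (P L : Matrix (Fin E ⊕ Fin E) (Fin E ⊕ Fin E) ℂ)
    (hP : P.IsHermitian) (hP2 : P * P = P)
    (hL : L.IsHermitian)
    (l : Fin E → ℝ) (lmin : ℝ) (hlmin : ∀ j, lmin ≤ l j)
    (lp : ℝ) (hlp : 0 < lp)
    (hspec : ∀ μ : ℝ, (μ : ℂ) ∈ spectrum ℂ L → 0 < μ → lp ≤ μ)
    (hcond : 2 / lp < lmin) :
    ∃ ε₀ > 0, ∀ ε : ℝ, 0 < ε → ε < ε₀ →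
      ε < lp * Real.tanh (ε * lmin / 2) ∧
      ∀ k : ℝ,
        ‖SPL P L ((k : ℂ) + (ε : ℂ) * Complex.I) *
            Tmat l ((k : ℂ) + (ε : ℂ) * Complex.I)‖ ≤
          max 1 ((lp + ε) / (lp - ε)) * Real.exp (-(ε * lmin)) ∧
        max 1 ((lp + ε) / (lp - ε)) * Real.exp (-(ε * lmin)) < 1 ∧
        HasSum (fun n : ℕ =>
            (SPL P L ((k : ℂ) + (ε : ℂ) * Complex.I) *
              Tmat l ((k : ℂ) + (ε : ℂ) * Complex.I))^n)
          (1 - SPL P L ((k : ℂ) + (ε : ℂ) * Complex.I) *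
              Tmat l ((k : ℂ) + (ε : ℂ) * Complex.I))⁻¹ := by
  have hlmin0 : 0 < lmin := (div_pos two_pos hlp).trans hcond
  have hlp_gt : 2 / lmin < lp := by rwa [div_lt_iff₀ hlmin0, mul_comm, ← div_lt_iff₀ hlp]
  refine ⟨lp - 2 / lmin, sub_pos.2 hlp_gt, fun ε hε hεε₀ => ?_⟩
  have hεlp : ε < lp := by linarith [div_pos two_pos hlmin0]
  have hgap : 2 < (lp - ε) * lmin := by rwa [← div_lt_iff₀ hlmin0, lt_sub_comm]
  have hexp := Real.add_lt_sub_mul_exp hε hεlp hgap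
  refine ⟨by simpa [mul_div_assoc] using Real.lt_mul_tanh_of_add_lt_sub_mul_exp hexp, fun k => ?_⟩
  have hU := (l2_opNorm_mul _ _).trans <| mul_le_mul
    (norm_SPL_le_of_spectrum ⟨hP2, hP⟩ hL hε hεlp hspec k) (norm_Tmat_le hlmin hε.le k)
    (norm_nonneg _) (zero_le_one.trans (le_max_left _ _))
  have hlt := Real.max_one_div_mul_exp_neg_lt_one (mul_pos hε hlmin0) hεlp hexp
  refine ⟨hU, hlt, ?_⟩
  rw [nonsing_inv_eq_ringInverse]
  exact hasSum_geom_series_inverse _ (hU.trans_lt hlt)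

/-- if l_min > 2/λ⁺_min then for all sufficiently small ε > 0 one has
ε < λ⁺_min tanh(ε l_min/2), ‖U(k+iε)‖ ≤ max{1,(λ⁺_min+ε)/(λ⁺_min-ε)} e^{-ε l_min} < 1,
and the Neumann series Σ U(k+iε)ˡ converges to (1 - U(k+iε))⁻¹. -/
theorem stmt_17 (E : ℕ) (P L : Matrix (Fin E ⊕ Fin E) (Fin E ⊕ Fin E) ℂ)
    (hP : P.IsHermitian) (hP2 : P * P = P)
    (hL : L.IsHermitian) (hPL : P * L = 0) (hLP : L * P = 0)
    (l : Fin E → ℝ) (lmin : ℝ) (hlmin : ∀ j, lmin ≤ l j)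
    (lp : ℝ) (hlp : 0 < lp)
    (hspec : ∀ μ : ℝ, (μ : ℂ) ∈ spectrum ℂ L → 0 < μ → lp ≤ μ)
    (hcond : 2 / lp < lmin) :
    ∃ ε₀ > 0, ∀ ε : ℝ, 0 < ε → ε < ε₀ →
      ε < lp * Real.tanh (ε * lmin / 2) ∧
      ∀ k : ℝ,
        ‖SPL P L ((k : ℂ) + (ε : ℂ) * Complex.I) *
            Tmat l ((k : ℂ) + (ε : ℂ) * Complex.I)‖ ≤
          max 1 ((lp + ε) / (lp - ε)) * Real.exp (-(ε * lmin)) ∧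
        max 1 ((lp + ε) / (lp - ε)) * Real.exp (-(ε * lmin)) < 1 ∧
        HasSum (fun n : ℕ =>
            (SPL P L ((k : ℂ) + (ε : ℂ) * Complex.I) *
              Tmat l ((k : ℂ) + (ε : ℂ) * Complex.I))^n)
          (1 - SPL P L ((k : ℂ) + (ε : ℂ) * Complex.I) *
              Tmat l ((k : ℂ) + (ε : ℂ) * Complex.I))⁻¹ :=
  stmt_17_general E P L hP hP2 hL l lmin hlmin lp hlp hspec hcond
end
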